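/- arXiv:2501.07710 — 3 statements merged into one kernel-verified Lean document; each statement's English description precedes it below -/
import Mathlib

section
/- Let $Q = (x^3,y^3)$ in $R = k[x,y,a,b]$ and let $i, j$ be non-negative integers with $i + j \ge 3n$ for some integer $n \ge 1$. Then the monomial $x^i y^j$ does not belong to $Q^n$ if and only if either ($i+j = 3n$ and $ij \not\equiv 0 \pmod 3$), or ($i+j = 3n+1$ and $i \equiv 2 \pmod 3$ and $j \equiv 2 \pmod 3$). -/
/-!
Expanding `(a, b)^n` shows that `(x^3, y^3)^n` is the monomial ideal generated by the
`x^(3s) y^(3t)` with `s + t = n`. A monomial lies in a monomial ideal exactly when it is divisible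
by one of the generators, so `x^i y^j ∈ (x^3, y^3)^n` iff `n ≤ ⌊i/3⌋ + ⌊j/3⌋`. Given
`3n ≤ i + j`, this fails exactly when the remainders of `i` and `j` mod 3 add up to at least
`i + j - 3n + 3`, which is what the two cases describe.
-/

open MvPolynomial

theorem Ideal.span_pair_pow {R : Type*} [CommSemiring R] (a b : R) (n : ℕ) :
    Ideal.span {a, b} ^ n =
      Ideal.span ((fun p : ℕ × ℕ => a ^ p.1 * b ^ p.2) '' {p | p.1 + p.2 = n}) := by
  induction n with
  | zero =>
    rw [pow_zero, Ideal.one_eq_top, eq_comm, Ideal.eq_top_iff_one]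
    exact Ideal.subset_span ⟨(0, 0), rfl, by simp⟩
  | succ n ih =>
    rw [pow_succ, ih, Ideal.span_mul_span']
    apply le_antisymm <;> rw [Ideal.span_le] <;> refine Set.Subset.trans ?_ Ideal.subset_span
    · rintro _ ⟨_, ⟨⟨p, q⟩, hpq, rfl⟩, c, hc | hc, rfl⟩ <;> subst hc
      · exact ⟨(p + 1, q), by simp_all; omega, by ring⟩
      · exact ⟨(p, q + 1), by simp_all; omega, by ring⟩
    · rintro _ ⟨⟨_ | p, q⟩, hpq, rfl⟩ <;> simp only [Set.mem_ofPred_eq] at hpq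
      · obtain rfl : q = n + 1 := by omega
        exact ⟨_, ⟨(0, n), by simp, rfl⟩, b, by simp, by ring⟩
      · exact ⟨_, ⟨(p, q), by simp; omega, rfl⟩, a, by simp, by ring⟩

theorem Nat.le_div_add_div_iff {c d : ℕ} (hc : 0 < c) (hd : 0 < d) (n i j : ℕ) :
    n ≤ i / c + j / d ↔ ∃ s t, s + t = n ∧ c * s ≤ i ∧ d * t ≤ j := by
  have le_div_iff {m a b : ℕ} (hm : 0 < m) : a ≤ b / m ↔ m * a ≤ b := by
    rw [Nat.le_div_iff_mul_le hm, mul_comm]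
  simp only [← le_div_iff hc, ← le_div_iff hd]
  constructor
  · generalize i / c = p
    generalize j / d = q
    intro h
    exact ⟨min n p, n - min n p, by omega, by omega, by omega⟩
  · rintro ⟨s, t, rfl, hs, ht⟩
    omega

theorem Finsupp.single_add_single_le_iff {σ : Type*} {u v : σ} (huv : u ≠ v) (s t i j : ℕ) :
    single u s + single v t ≤ single u i + single v j ↔ s ≤ i ∧ t ≤ j := by
  constructor
  · intro h
    simpa [huv, huv.symm] using And.intro (h u) (h v)
  · rintro ⟨hs, ht⟩ w
    by_cases hwu : w = u
    · subst hwu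
      simp [huv, hs]
    · by_cases hwv : w = v
      · subst hwv
        simp [hwu, ht]
      · simp [Ne.symm hwu, Ne.symm hwv]

theorem MvPolynomial.X_pow_mul_X_pow_mem_span_iff {σ R ι : Type*} [CommSemiring R] [Nontrivial R]
    {u v : σ} (huv : u ≠ v) (f g : ι → ℕ) (S : Set ι) (i j : ℕ) :
    X u ^ i * X v ^ j ∈ Ideal.span ((fun e => (X u ^ f e * X v ^ g e : MvPolynomial σ R)) '' S) ↔
      ∃ e ∈ S, f e ≤ i ∧ g e ≤ j := by
  have hmon (s t : ℕ) : (X u ^ s * X v ^ t : MvPolynomial σ R) =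
      monomial (Finsupp.single u s + Finsupp.single v t) 1 := by
    rw [X_pow_eq_monomial, X_pow_eq_monomial, monomial_mul, one_mul]
  classical
  simp_rw [hmon]
  rw [← Set.image_image (fun s => monomial s (1 : R)), mem_ideal_span_monomial_image,
    support_monomial, if_neg one_ne_zero]
  simp_rw [Finset.mem_singleton, forall_eq, Set.exists_mem_image,
    Finsupp.single_add_single_le_iff huv]

theorem MvPolynomial.X_pow_mul_X_pow_mem_span_pair_pow_iff {σ R : Type*} [CommSemiring R]
    [Nontrivial R] {u v : σ} (huv : u ≠ v) (c d n i j : ℕ) :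
    X u ^ i * X v ^ j ∈ (Ideal.span {(X u ^ c : MvPolynomial σ R), X v ^ d}) ^ n ↔
      ∃ s t, s + t = n ∧ c * s ≤ i ∧ d * t ≤ j := by
  simp_rw [Ideal.span_pair_pow, ← pow_mul, X_pow_mul_X_pow_mem_span_iff huv, Prod.exists,
    Set.mem_ofPred_eq]

theorem stmt_1_general (k : Type*) [Field k] (n i j : ℕ) (hij : 3 * n ≤ i + j) :
    ((X 0 : MvPolynomial (Fin 4) k) ^ i * X 1 ^ j ∉
        (Ideal.span {(X 0 : MvPolynomial (Fin 4) k) ^ 3, X 1 ^ 3}) ^ n) ↔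
      ((i + j = 3 * n ∧ ¬ (3 ∣ i * j)) ∨
        (i + j = 3 * n + 1 ∧ i % 3 = 2 ∧ j % 3 = 2)) := by
  rw [X_pow_mul_X_pow_mem_span_pair_pow_iff (by decide),
    ← Nat.le_div_add_div_iff three_pos three_pos, Nat.prime_three.dvd_mul]
  omega

theorem stmt_1 (k : Type*) [Field k] (n i j : ℕ) (hn : 1 ≤ n) (hij : 3 * n ≤ i + j) :
    ((X 0 : MvPolynomial (Fin 4) k) ^ i * X 1 ^ j ∉
        (Ideal.span {(X 0 : MvPolynomial (Fin 4) k) ^ 3, X 1 ^ 3}) ^ n) ↔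
      ((i + j = 3 * n ∧ ¬ (3 ∣ i * j)) ∨
        (i + j = 3 * n + 1 ∧ i % 3 = 2 ∧ j % 3 = 2)) :=
  stmt_1_general k n i j hij
end

section
/- Let $k$ be a field of characteristic 2, $R = k[x,y,a,b]$, $Q = (x^3,y^3)$, $\mathfrak{m} = (x,y,a,b)$, $f = xya + (x^2+y^2)b$, and let $n = 2^s$ with $s \ge 3$ odd. Set $h = x^n y^{2n+1} a^{n-1} b^{n-1}$. Then $h \cdot x \in Q^n$, $h \cdot y \in Q^n$, $h \cdot a \in Q^n + (f^n)$, and $h \cdot b \in Q^n + (f^n)$; in particular $h \in (Q^n + (f^n)) : \mathfrak{m}$. -/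
open MvPolynomial

/-- The ideal `Q^n = (x^3, y^3)^n` in `k[x,y,a,b]`. -/
noncomputable def Qpow (k : Type*) [Field k] (n : ℕ) : Ideal (MvPolynomial (Fin 4) k) :=
  (Ideal.span {(X 0 : MvPolynomial (Fin 4) k) ^ 3, X 1 ^ 3}) ^ n

/-- The polynomial `f = xya + (x^2 + y^2)b` in `k[x,y,a,b]`. -/
noncomputable def fpoly (k : Type*) [Field k] : MvPolynomial (Fin 4) k :=
  X 0 * X 1 * X 2 + (X 0 ^ 2 + X 1 ^ 2) * X 3

lemma mem_Qpow (k : Type*) [Field k] (n A B i : ℕ) (hi : i ≤ n) (hA : 3*i ≤ A)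
    (hB : 3*(n-i) ≤ B) (r : MvPolynomial (Fin 4) k) :
    r * (X 0 ^ A * X 1 ^ B) ∈ Qpow k n := by
  obtain ⟨A', rfl⟩ : ∃ A', A = 3*i + A' := ⟨A - 3*i, by omega⟩
  obtain ⟨B', rfl⟩ : ∃ B', B = 3*(n-i) + B' := ⟨B - 3*(n-i), by omega⟩
  have h1 : (X 0 : MvPolynomial (Fin 4) k) ^ 3 ∈ Ideal.span {(X 0 : MvPolynomial (Fin 4) k) ^ 3, X 1 ^ 3} :=
    Ideal.subset_span (Set.mem_insert _ _)
  have h2 : (X 1 : MvPolynomial (Fin 4) k) ^ 3 ∈ Ideal.span {(X 0 : MvPolynomial (Fin 4) k) ^ 3, X 1 ^ 3} :=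
    Ideal.subset_span (Set.mem_insert_of_mem _ rfl)
  have hQ : ((X 0 : MvPolynomial (Fin 4) k) ^ 3) ^ i * ((X 1 : MvPolynomial (Fin 4) k) ^ 3) ^ (n-i) ∈ Qpow k n := by
    have := Ideal.mul_mem_mul (Ideal.pow_mem_pow h1 i) (Ideal.pow_mem_pow h2 (n-i))
    rwa [← pow_add, Nat.add_sub_cancel' hi] at this
  have heq : r * (X 0 ^ (3*i + A') * X 1 ^ (3*(n-i) + B'))
      = (((X 0 : MvPolynomial (Fin 4) k) ^ 3) ^ i * ((X 1 : MvPolynomial (Fin 4) k) ^ 3) ^ (n-i))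
        * (r * X 0 ^ A' * X 1 ^ B') := by
    rw [pow_add, pow_add, ← pow_mul, ← pow_mul]; ring
  rw [heq]
  exact Ideal.mul_mem_right _ _ hQ

lemma pow_odd_form (s : ℕ) (hs : 3 ≤ s) (hodd : Odd s) : ∃ u, 1 ≤ u ∧ 2 ^ s = 6 * u + 2 := by
  obtain ⟨t, rfl⟩ := hodd
  have h4 : ∀ m : ℕ, ∃ v, 4 ^ m = 3 * v + 1 := by
    intro m
    induction m with
    | zero => exact ⟨0, rfl⟩
    | succ m ih => obtain ⟨v, hv⟩ := ih; exact ⟨4 * v + 1, by rw [pow_succ, hv]; ring⟩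
  obtain ⟨v, hv⟩ := h4 t
  refine ⟨v, ?_, ?_⟩
  · have ht : 1 ≤ t := by omega
    have : 4 ≤ 4 ^ t := by calc 4 = 4 ^ 1 := rfl
                                _ ≤ 4 ^ t := Nat.pow_le_pow_right (by norm_num) ht
    omega
  · have : (2:ℕ) ^ (2*t+1) = 2 * 4 ^ t := by
      rw [pow_succ, pow_mul]; ring_nf
    rw [this, hv]; ring

theorem stmt_13 (k : Type*) [Field k] [CharP k 2] (s : ℕ) (hs : 3 ≤ s) (hodd : Odd s) :
    let n := 2 ^ s
    let h : MvPolynomial (Fin 4) k :=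
      X 0 ^ n * X 1 ^ (2 * n + 1) * X 2 ^ (n - 1) * X 3 ^ (n - 1)
    h * X 0 ∈ Qpow k n ∧ h * X 1 ∈ Qpow k n ∧
      h * X 2 ∈ Qpow k n + Ideal.span {fpoly k ^ n} ∧
      h * X 3 ∈ Qpow k n + Ideal.span {fpoly k ^ n} ∧
      h ∈ Submodule.colon (Qpow k n + Ideal.span {fpoly k ^ n})
        (Ideal.span {(X 0 : MvPolynomial (Fin 4) k), X 1, X 2, X 3}) := by
  intro n h
  obtain ⟨u, hu1, hu⟩ := pow_odd_form s hs hodd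
  haveI : Fact (Nat.Prime 2) := ⟨by norm_num⟩
  have htwo : (2 : MvPolynomial (Fin 4) k) = 0 := by
    exact_mod_cast CharP.cast_eq_zero (MvPolynomial (Fin 4) k) 2
  -- expansion of f^n
  have hf : fpoly k ^ n = X 0 ^ n * X 1 ^ n * X 2 ^ n + (X 0 ^ (2*n) + X 1 ^ (2*n)) * X 3 ^ n := by
    show fpoly k ^ (2^s) = _
    rw [fpoly, add_pow_char_pow, mul_pow, mul_pow, mul_pow, add_pow_char_pow]
    show _ = X 0 ^ n * X 1 ^ n * X 2 ^ n + (X 0 ^ (2*n) + X 1 ^ (2*n)) * X 3 ^ n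
    rw [← pow_mul, ← pow_mul]
  have hn : n = 6*u + 2 := hu
  have hh : h = X 0 ^ (6*u+2) * X 1 ^ (12*u+5) * X 2 ^ (6*u+1) * X 3 ^ (6*u+1) := by
    show X 0 ^ n * X 1 ^ (2 * n + 1) * X 2 ^ (n - 1) * X 3 ^ (n - 1) = _
    rw [hn, show 2*(6*u+2)+1 = 12*u+5 from by ring, show 6*u+2-1 = 6*u+1 from by omega]
  -- part 1
  have H0 : h * X 0 ∈ Qpow k n := by
    rw [hh, hn]
    have : X 0 ^ (6*u+2) * X 1 ^ (12*u+5) * X 2 ^ (6*u+1) * X 3 ^ (6*u+1) * X 0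
        = (X 2 ^ (6*u+1) * X 3 ^ (6*u+1) : MvPolynomial (Fin 4) k) * (X 0 ^ (6*u+3) * X 1 ^ (12*u+5)) := by
      ring
    rw [this]
    exact mem_Qpow k (6*u+2) _ _ (2*u+1) (by omega) (by omega) (by omega) _
  have H1 : h * X 1 ∈ Qpow k n := by
    rw [hh, hn]
    have : X 0 ^ (6*u+2) * X 1 ^ (12*u+5) * X 2 ^ (6*u+1) * X 3 ^ (6*u+1) * X 1
        = (X 2 ^ (6*u+1) * X 3 ^ (6*u+1) : MvPolynomial (Fin 4) k) * (X 0 ^ (6*u+2) * X 1 ^ (12*u+6)) := by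
      ring
    rw [this]
    exact mem_Qpow k (6*u+2) _ _ (2*u) (by omega) (by omega) (by omega) _
  have H2 : h * X 2 ∈ Qpow k n + Ideal.span {fpoly k ^ n} := by
    rw [Submodule.add_eq_sup, Submodule.mem_sup]
    refine ⟨(X 3 ^ (12*u+3) : MvPolynomial (Fin 4) k) * (X 0 ^ (12*u+4) * X 1 ^ (6*u+3))
        + (X 3 ^ (12*u+3) : MvPolynomial (Fin 4) k) * (X 0 ^ 0 * X 1 ^ (18*u+7)), ?_,
      X 1 ^ (6*u+3) * X 3 ^ (6*u+1) * fpoly k ^ n, ?_, ?_⟩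
    · exact Ideal.add_mem _
        (mem_Qpow k n _ _ (4*u+1) (by omega) (by omega) (by omega) _)
        (mem_Qpow k n _ _ 0 (by omega) (by omega) (by omega) _)
    · exact Ideal.mem_span_singleton.mpr ⟨_, mul_comm _ _⟩
    · rw [hf, hh, hn]
      linear_combination ((X 0 : MvPolynomial (Fin 4) k) ^ (12*u+4) * X 1 ^ (6*u+3) * X 3 ^ (12*u+3)
        + X 1 ^ (18*u+7) * X 3 ^ (12*u+3)) * htwo
  have H3 : h * X 3 ∈ Qpow k n + Ideal.span {fpoly k ^ n} := by
    rw [Submodule.add_eq_sup, Submodule.mem_sup]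
    refine ⟨(X 2 ^ (12*u+3) : MvPolynomial (Fin 4) k) * (X 0 ^ (12*u+4) * X 1 ^ (6*u+3))
        + (X 2 ^ (6*u+1) * X 3 ^ (6*u+2) : MvPolynomial (Fin 4) k) * (X 0 ^ (18*u+6) * X 1 ^ 1), ?_,
      X 0 ^ (6*u+2) * X 1 ^ 1 * X 2 ^ (6*u+1) * fpoly k ^ n, ?_, ?_⟩
    · exact Ideal.add_mem _
        (mem_Qpow k n _ _ (4*u+1) (by omega) (by omega) (by omega) _)
        (mem_Qpow k n _ _ n (by omega) (by omega) (by omega) _)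
    · exact Ideal.mem_span_singleton.mpr ⟨_, mul_comm _ _⟩
    · rw [hf, hh, hn]
      linear_combination ((X 0 : MvPolynomial (Fin 4) k) ^ (12*u+4) * X 1 ^ (6*u+3) * X 2 ^ (12*u+3)
        + X 0 ^ (18*u+6) * X 1 * X 2 ^ (6*u+1) * X 3 ^ (6*u+2)) * htwo
  refine ⟨H0, H1, H2, H3, ?_⟩
  rw [Submodule.mem_colon]
  intro p hp
  have hle : Qpow k n ≤ Qpow k n + Ideal.span {fpoly k ^ n} := by
    rw [Submodule.add_eq_sup]; exact le_sup_left
  induction hp using Submodule.span_induction with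
  | mem g hg =>
    simp only [Set.mem_insert_iff, Set.mem_singleton_iff] at hg
    rcases hg with rfl | rfl | rfl | rfl
    · exact hle H0
    · exact hle H1
    · exact H2
    · exact H3
  | zero => simp
  | add g g' _ _ hg hg' =>
    rw [smul_add]; exact Ideal.add_mem _ hg hg'
  | smul c g _ hg =>
    rw [smul_comm]; exact Submodule.smul_mem _ _ hg
end

section
/- Let $P_n \subseteq \mathbb{R}^2$ be the convex polyhedron $P_n = \mathrm{conv}\{(5n,0), (3n+1,1), (0,2n)\} + \mathbb{R}^2_{\ge 0}$ for each $n \ge 1$. Then $P_m + P_n \subseteq P_{m+n}$ for all $m, n \ge 1$, where $+$ on the left denotes Minkowski sum. -/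
open Pointwise

private lemma quad_convex : Convex ℝ {p : ℝ × ℝ | 0 ≤ p.1 ∧ 0 ≤ p.2} := by
  intro x hx y hy a b ha hb hab
  constructor <;> simp only [Prod.fst_add, Prod.snd_add, Prod.smul_fst, Prod.smul_snd,
    smul_eq_mul] <;>
    [exact add_nonneg (mul_nonneg ha hx.1) (mul_nonneg hb hy.1);
     exact add_nonneg (mul_nonneg ha hx.2) (mul_nonneg hb hy.2)]

private lemma mem_PQ {K : ℝ} {c w : ℝ × ℝ}
    (hc : c ∈ convexHull ℝ {((5 * K : ℝ), (0:ℝ)), ((3 * K + 1 : ℝ), (1:ℝ)), ((0:ℝ), (2 * K : ℝ))})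
    (hw : 0 ≤ w.1 ∧ 0 ≤ w.2) (z : ℝ × ℝ) (hz : z = c + w) :
    z ∈ convexHull ℝ {((5 * K : ℝ), (0:ℝ)), ((3 * K + 1 : ℝ), (1:ℝ)), ((0:ℝ), (2 * K : ℝ))}
      + {p : ℝ × ℝ | 0 ≤ p.1 ∧ 0 ≤ p.2} :=
  ⟨c, hc, w, hw, hz.symm⟩

private lemma seg_mem {K : ℝ} {a b : ℝ} (ha : 0 ≤ a) (hb : 0 ≤ b) (hab : a + b = 1)
    {x y : ℝ × ℝ}
    (hx : x ∈ ({((5 * K : ℝ), (0:ℝ)), ((3 * K + 1 : ℝ), (1:ℝ)), ((0:ℝ), (2 * K : ℝ))} : Set (ℝ × ℝ)))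
    (hy : y ∈ ({((5 * K : ℝ), (0:ℝ)), ((3 * K + 1 : ℝ), (1:ℝ)), ((0:ℝ), (2 * K : ℝ))} : Set (ℝ × ℝ))) :
    a • x + b • y ∈ convexHull ℝ
      ({((5 * K : ℝ), (0:ℝ)), ((3 * K + 1 : ℝ), (1:ℝ)), ((0:ℝ), (2 * K : ℝ))} : Set (ℝ × ℝ)) :=
  segment_subset_convexHull hx hy ⟨a, b, ha, hb, hab, rfl⟩

private lemma key (M N : ℝ) (hM : 1 ≤ M) (hN : 1 ≤ N) (s t : ℝ × ℝ)
    (hs : s ∈ ({((5 * M : ℝ), (0:ℝ)), ((3 * M + 1 : ℝ), (1:ℝ)), ((0:ℝ), (2 * M : ℝ))} : Set (ℝ × ℝ)))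
    (ht : t ∈ ({((5 * N : ℝ), (0:ℝ)), ((3 * N + 1 : ℝ), (1:ℝ)), ((0:ℝ), (2 * N : ℝ))} : Set (ℝ × ℝ))) :
    s + t ∈ convexHull ℝ
        ({((5 * (M + N) : ℝ), (0:ℝ)), ((3 * (M + N) + 1 : ℝ), (1:ℝ)), ((0:ℝ), (2 * (M + N) : ℝ))} : Set (ℝ × ℝ))
      + {p : ℝ × ℝ | 0 ≤ p.1 ∧ 0 ≤ p.2} := by
  set K := M + N with hKdef
  have hM0 : (0:ℝ) < M := lt_of_lt_of_le one_pos hM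
  have hN0 : (0:ℝ) < N := lt_of_lt_of_le one_pos hN
  have hK0 : (0:ℝ) < K := by simp only [hKdef]; linarith
  have hK1 : (0:ℝ) < 2 * K - 1 := by simp only [hKdef]; linarith
  have hxA : ((5 * K : ℝ), (0:ℝ)) ∈
      ({((5 * K : ℝ), (0:ℝ)), ((3 * K + 1 : ℝ), (1:ℝ)), ((0:ℝ), (2 * K : ℝ))} : Set (ℝ × ℝ)) :=
    Set.mem_insert _ _
  have hxB : ((3 * K + 1 : ℝ), (1:ℝ)) ∈
      ({((5 * K : ℝ), (0:ℝ)), ((3 * K + 1 : ℝ), (1:ℝ)), ((0:ℝ), (2 * K : ℝ))} : Set (ℝ × ℝ)) :=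
    Set.mem_insert_of_mem _ (Set.mem_insert _ _)
  have hxC : ((0:ℝ), (2 * K : ℝ)) ∈
      ({((5 * K : ℝ), (0:ℝ)), ((3 * K + 1 : ℝ), (1:ℝ)), ((0:ℝ), (2 * K : ℝ))} : Set (ℝ × ℝ)) :=
    Set.mem_insert_of_mem _ (Set.mem_insert_of_mem _ rfl)
  have hA := subset_convexHull ℝ _ hxA
  have hB := subset_convexHull ℝ _ hxB
  have hC := subset_convexHull ℝ _ hxC
  -- point (5m, 2n) for m + n = K lies in the hull (segment A-C)
  have hAC : ∀ m n : ℝ, 0 < m → 0 < n → m + n = K →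
      ((5 * m : ℝ), (2 * n : ℝ)) ∈ convexHull ℝ
        ({((5 * K : ℝ), (0:ℝ)), ((3 * K + 1 : ℝ), (1:ℝ)), ((0:ℝ), (2 * K : ℝ))} : Set (ℝ × ℝ)) := by
    intro m n hm hn hmn
    have heq : (m / K) • ((5 * K : ℝ), (0:ℝ)) + (n / K) • ((0:ℝ), (2 * K : ℝ))
        = ((5 * m : ℝ), (2 * n : ℝ)) := by
      rw [Prod.smul_mk, Prod.smul_mk, Prod.mk_add_mk, Prod.mk.injEq]
      simp only [smul_eq_mul]
      constructor <;> field_simp <;> ring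
    rw [← heq]
    exact seg_mem (le_of_lt (div_pos hm hK0)) (le_of_lt (div_pos hn hK0))
      (by field_simp; linarith) hxA hxC
  -- point (3m+1, 2n+1) for m + n = K lies in the hull + quadrant
  have hBC : ∀ m n : ℝ, 1 ≤ m → 1 ≤ n → m + n = K →
      ((3 * m + 1 : ℝ), (2 * n + 1 : ℝ)) ∈ convexHull ℝ
        ({((5 * K : ℝ), (0:ℝ)), ((3 * K + 1 : ℝ), (1:ℝ)), ((0:ℝ), (2 * K : ℝ))} : Set (ℝ × ℝ))
      + {p : ℝ × ℝ | 0 ≤ p.1 ∧ 0 ≤ p.2} := by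
    intro m n hm hn hmn
    have hseg := seg_mem (K := K) (a := (2 * m - 1) / (2 * K - 1)) (b := (2 * n) / (2 * K - 1))
      (div_nonneg (by linarith) (by linarith))
      (div_nonneg (by linarith) (by linarith))
      (by field_simp; linarith) hxB hxC
    refine mem_PQ hseg
      (w := ((3 * m + 1) - (2 * m - 1) / (2 * K - 1) * (3 * K + 1), 0)) ⟨?_, le_refl 0⟩ _ ?_
    · show (0:ℝ) ≤ (3 * m + 1) - (2 * m - 1) / (2 * K - 1) * (3 * K + 1)
      rw [sub_nonneg, div_mul_eq_mul_div, div_le_iff₀ hK1]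
      nlinarith
    · rw [Prod.smul_mk, Prod.smul_mk, Prod.mk_add_mk, Prod.mk_add_mk, Prod.mk.injEq]
      simp only [smul_eq_mul]
      constructor
      · ring
      · field_simp
        nlinarith
  -- 9 cases
  simp only [Set.mem_insert_iff, Set.mem_singleton_iff] at hs ht
  rcases hs with rfl | rfl | rfl <;> rcases ht with rfl | rfl | rfl
  · refine mem_PQ hA (w := ((0:ℝ),(0:ℝ))) ⟨le_refl 0, le_refl 0⟩ _ ?_
    rw [Prod.mk_add_mk, Prod.mk_add_mk, Prod.mk.injEq]
    constructor <;> (try rw [hKdef]) <;> ring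
  · refine mem_PQ hB (w := ((2 * M : ℝ), (0:ℝ))) ⟨by show (0:ℝ) ≤ 2 * M; linarith, le_refl 0⟩ _ ?_
    rw [Prod.mk_add_mk, Prod.mk_add_mk, Prod.mk.injEq]
    constructor <;> (try rw [hKdef]) <;> ring
  · have heq : ((5 * M : ℝ), (0:ℝ)) + ((0:ℝ), (2 * N : ℝ)) = ((5 * M : ℝ), (2 * N : ℝ)) := by
      rw [Prod.mk_add_mk, Prod.mk.injEq]; constructor <;> ring
    rw [heq]
    exact ⟨_, hAC M N hM0 hN0 rfl, (0, 0), ⟨le_refl 0, le_refl 0⟩, (add_zero _)⟩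
  · refine mem_PQ hB (w := ((2 * N : ℝ), (0:ℝ))) ⟨by show (0:ℝ) ≤ 2 * N; linarith, le_refl 0⟩ _ ?_
    rw [Prod.mk_add_mk, Prod.mk_add_mk, Prod.mk.injEq]
    constructor <;> (try rw [hKdef]) <;> ring
  · refine mem_PQ hB (w := ((1:ℝ), (1:ℝ))) ⟨zero_le_one, zero_le_one⟩ _ ?_
    rw [Prod.mk_add_mk, Prod.mk_add_mk, Prod.mk.injEq]
    constructor <;> (try rw [hKdef]) <;> ring
  · have heq : ((3 * M + 1 : ℝ), (1:ℝ)) + ((0:ℝ), (2 * N : ℝ)) = ((3 * M + 1 : ℝ), (2 * N + 1 : ℝ)) := by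
      rw [Prod.mk_add_mk, Prod.mk.injEq]; constructor <;> ring
    rw [heq]; exact hBC M N hM hN rfl
  · have heq : ((0:ℝ), (2 * M : ℝ)) + ((5 * N : ℝ), (0:ℝ)) = ((5 * N : ℝ), (2 * M : ℝ)) := by
      rw [Prod.mk_add_mk, Prod.mk.injEq]; constructor <;> ring
    rw [heq]
    exact ⟨_, hAC N M hN0 hM0 (by simp only [hKdef]; ring), (0, 0), ⟨le_refl 0, le_refl 0⟩, (add_zero _)⟩
  · have heq : ((0:ℝ), (2 * M : ℝ)) + ((3 * N + 1 : ℝ), (1:ℝ)) = ((3 * N + 1 : ℝ), (2 * M + 1 : ℝ)) := by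
      rw [Prod.mk_add_mk, Prod.mk.injEq]; constructor <;> ring
    rw [heq]; exact hBC N M hN hM (by simp only [hKdef]; ring)
  · refine mem_PQ hC (w := ((0:ℝ),(0:ℝ))) ⟨le_refl 0, le_refl 0⟩ _ ?_
    rw [Prod.mk_add_mk, Prod.mk_add_mk, Prod.mk.injEq]
    constructor <;> (try rw [hKdef]) <;> ring

theorem stmt_15 (P : ℕ → Set (ℝ × ℝ))
    (hP : ∀ n : ℕ, P n =
      convexHull ℝ {((5 * n : ℝ), (0 : ℝ)), ((3 * n + 1 : ℝ), (1 : ℝ)), ((0 : ℝ), (2 * n : ℝ))}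
        + {p : ℝ × ℝ | 0 ≤ p.1 ∧ 0 ≤ p.2}) :
    ∀ m n : ℕ, 1 ≤ m → 1 ≤ n → P m + P n ⊆ P (m + n) := by
  intro m n hm hn
  rw [hP m, hP n, hP (m + n)]
  rintro z ⟨p, ⟨a, ha, u, hu, rfl⟩, q, ⟨b, hb, v, hv, rfl⟩, rfl⟩
  have hM : (1:ℝ) ≤ (m:ℝ) := by exact_mod_cast hm
  have hN : (1:ℝ) ≤ (n:ℝ) := by exact_mod_cast hn
  have hab : a + b ∈ convexHull ℝ
      (({((5 * m : ℝ), (0:ℝ)), ((3 * m + 1 : ℝ), (1:ℝ)), ((0:ℝ), (2 * m : ℝ))} : Set (ℝ × ℝ))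
       + ({((5 * n : ℝ), (0:ℝ)), ((3 * n + 1 : ℝ), (1:ℝ)), ((0:ℝ), (2 * n : ℝ))} : Set (ℝ × ℝ))) := by
    rw [convexHull_add]; exact ⟨a, ha, b, hb, rfl⟩
  have hsub : convexHull ℝ
      (({((5 * m : ℝ), (0:ℝ)), ((3 * m + 1 : ℝ), (1:ℝ)), ((0:ℝ), (2 * m : ℝ))} : Set (ℝ × ℝ))
       + ({((5 * n : ℝ), (0:ℝ)), ((3 * n + 1 : ℝ), (1:ℝ)), ((0:ℝ), (2 * n : ℝ))} : Set (ℝ × ℝ)))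
      ⊆ convexHull ℝ
        ({((5 * ((m:ℝ) + n) : ℝ), (0:ℝ)), ((3 * ((m:ℝ) + n) + 1 : ℝ), (1:ℝ)),
          ((0:ℝ), (2 * ((m:ℝ) + n) : ℝ))} : Set (ℝ × ℝ))
      + {p : ℝ × ℝ | 0 ≤ p.1 ∧ 0 ≤ p.2} := by
    apply convexHull_min
    · rintro x ⟨s, hs, t, ht, rfl⟩
      exact key (m:ℝ) (n:ℝ) hM hN s t hs ht
    · exact Convex.add (convex_convexHull ℝ _) quad_convex
  obtain ⟨c, hc, w, hw, hcw⟩ := hsub hab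
  have hcw' : c + w = a + b := hcw
  have hc' : c ∈ convexHull ℝ
      ({((5 * ((m + n : ℕ)) : ℝ), (0:ℝ)), ((3 * ((m + n : ℕ)) + 1 : ℝ), (1:ℝ)),
        ((0:ℝ), (2 * ((m + n : ℕ)) : ℝ))} : Set (ℝ × ℝ)) := by
    push_cast
    exact hc
  refine ⟨c, hc', w + (u + v),
    ⟨?_, ?_⟩, ?_⟩
  · show (0:ℝ) ≤ w.1 + (u.1 + v.1)
    have := hw.1; have := hu.1; have := hv.1; linarith
  · show (0:ℝ) ≤ w.2 + (u.2 + v.2)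
    have := hw.2; have := hu.2; have := hv.2; linarith
  · show c + (w + (u + v)) = (a + u) + (b + v)
    rw [show (a + u) + (b + v) = (a + b) + (u + v) by abel, ← hcw']
    abel
end
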